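/- arXiv:2410.24193 — 2 statements merged into one kernel-verified Lean document; each statement's English description precedes it below -/
import Mathlib

section
/- Let X be a finitely generated torsion module over Λ = O⟦T⟧ with characteristic power series F ∈ Λ, and assume X has no nonzero finite Λ-submodules. If X^Γ := X[T] is finite, then X/TX is finite and #(X/TX) = #(O/F(0)) · #(X[T]). -/
/-!
Since `X` has no nonzero finite submodules, the pseudo-isomorphism `φ : X → E = ⊕ Λ/(fᵢ)` is
injective and `X[T] = 0`. Computing the index of `T φ(X)` in `E` in two ways,
`[E : φ(X)] [X : TX] = [E : T φ(X)] = [E : φ(X)] [E : TE]` (the second because `T` is injective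
on `E`), and cancelling the finite index `[E : φ(X)]` gives
`#(X/TX) = #(E/TE) = ∏ #(O/fᵢ(0)) = #(O/F(0))`.
`T` is injective on `E` because every `fᵢ(0) ≠ 0`: `fᵢ ≠ 0` as `X` is torsion, and
`fᵢ = T g` would put a copy of `O` into the `T`-torsion of `E`, which injects into the finite
`E/φ(X)`.
-/

/-- Characteristic-ideal predicate over `Λ = O⟦T⟧` (pseudo-isomorphism onto an elementary
module, with pseudo-null = finite). -/
def IsCharIdeal (O : Type*) [CommRing O] (X : Type*) [AddCommGroup X]
    [Module (PowerSeries O) X] (I : Ideal (PowerSeries O)) : Prop :=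
  ∃ (n : ℕ) (f : Fin n → PowerSeries O)
    (φ : X →ₗ[PowerSeries O] ((i : Fin n) → PowerSeries O ⧸ Ideal.span {f i})),
      Finite (LinearMap.ker φ) ∧
      Finite (((i : Fin n) → PowerSeries O ⧸ Ideal.span {f i}) ⧸ LinearMap.range φ) ∧
      I = Ideal.span {∏ i, f i}

open Pointwise PowerSeries

section Index

variable {R M N : Type*} [CommRing R] [AddCommGroup M] [Module R M] [AddCommGroup N] [Module R N]

theorem Submodule.index_smul {r : R} (hr : IsSMulRegular N r) (P : Submodule R N) :
    (r • P).toAddSubgroup.index =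
      P.toAddSubgroup.index * (r • ⊤ : Submodule R N).toAddSubgroup.index := by
  rw [Submodule.pointwise_smul_def, Submodule.map_toAddSubgroup,
    AddSubgroup.index_map_of_injective (f := (DistribSMul.toLinearMap R N r : N →+ N)) _ hr,
    Submodule.pointwise_smul_def (S := ⊤), Submodule.map_top, LinearMap.range_toAddSubgroup]
  rfl

theorem index_smul_top_eq_of_injective {φ : M →ₗ[R] N} (hφ : Function.Injective φ)
    (hfin : (LinearMap.range φ).toAddSubgroup.index ≠ 0) {r : R} (hr : IsSMulRegular N r) :
    (r • ⊤ : Submodule R M).toAddSubgroup.index =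
      (r • ⊤ : Submodule R N).toAddSubgroup.index := by
  have h : ((r • ⊤ : Submodule R M).map φ).toAddSubgroup.index =
      (r • LinearMap.range φ).toAddSubgroup.index := by
    rw [Submodule.map_pointwise_smul, Submodule.map_top]
  rw [Submodule.map_toAddSubgroup, AddSubgroup.index_map_of_injective _ hφ,
    Submodule.index_smul hr, mul_comm] at h
  exact Nat.eq_of_mul_eq_mul_left (Nat.pos_of_ne_zero hfin) h

theorem Submodule.smul_top_pi {ι : Type*} {M : ι → Type*} [∀ i, AddCommGroup (M i)]
    [∀ i, Module R (M i)] (r : R) :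
    (r • ⊤ : Submodule R (∀ i, M i)) = Submodule.pi Set.univ (fun _ => r • ⊤) := by
  ext x
  simp only [Submodule.mem_pi, Set.mem_univ, true_implies, Submodule.mem_smul_pointwise_iff_exists,
    Submodule.mem_top, true_and]
  refine ⟨fun ⟨y, hy⟩ i => ⟨y i, by rw [← hy]; rfl⟩, fun h => ?_⟩
  choose y hy using h
  exact ⟨y, funext hy⟩

theorem Submodule.index_smul_top_pi {ι : Type*} [Fintype ι] {M : ι → Type*}
    [∀ i, AddCommGroup (M i)] [∀ i, Module R (M i)] (r : R) :
    (r • ⊤ : Submodule R (∀ i, M i)).toAddSubgroup.index =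
      ∏ i, (r • ⊤ : Submodule R (M i)).toAddSubgroup.index := by
  classical
  rw [Submodule.smul_top_pi]
  exact (Nat.card_congr (Submodule.quotientPi _).toEquiv).trans Nat.card_pi

theorem finite_torsionBy_of_injective {φ : M →ₗ[R] N} (hφ : Function.Injective φ) {r : R}
    (hr : IsSMulRegular M r) [Finite (N ⧸ LinearMap.range φ)] :
    Finite (Submodule.torsionBy R N r) := by
  refine Finite.of_injective
    ((LinearMap.range φ).mkQ ∘ₗ (Submodule.torsionBy R N r).subtype) ?_
  refine (injective_iff_map_eq_zero _).mpr fun ⟨e, he⟩ h => ?_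
  obtain ⟨x, rfl⟩ : e ∈ LinearMap.range φ := (Submodule.Quotient.mk_eq_zero _).mp h
  have hx : x = 0 := hr (show r • x = r • 0 by
    rw [smul_zero]; exact hφ (by rw [map_smul, map_zero]; exact he))
  simp [hx]

theorem finite_torsionBy_of_pi {ι : Type*} [DecidableEq ι] {M : ι → Type*}
    [∀ i, AddCommGroup (M i)] [∀ i, Module R (M i)] {r : R}
    (h : Finite (Submodule.torsionBy R (∀ i, M i) r)) (i : ι) :
    Finite (Submodule.torsionBy R (M i) r) :=
  Finite.of_injective (fun x => (⟨Pi.single i x.1, by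
      rw [Submodule.mem_torsionBy_iff, ← Pi.single_smul, (Submodule.mem_torsionBy_iff _ _).mp x.2,
        Pi.single_zero]⟩ : Submodule.torsionBy R (∀ i, M i) r))
    fun _ _ h => Subtype.ext (Pi.single_injective i (congrArg Subtype.val h))

end Index

section Domain

variable {R : Type*} [CommRing R] [IsDomain R]

theorem Ideal.card_quot_span_mul {a : R} (ha : a ≠ 0) (b : R) :
    Nat.card (R ⧸ Ideal.span {a * b}) =
      Nat.card (R ⧸ Ideal.span {b}) * Nat.card (R ⧸ Ideal.span {a}) := by
  have hspan : (Ideal.span {a * b} : Ideal R) = a • Ideal.span {b} := by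
    rw [Submodule.smul_span, Set.smul_set_singleton, smul_eq_mul]
  have htop : (a • ⊤ : Submodule R R) = Ideal.span {a} := by
    rw [← Submodule.ideal_span_singleton_smul, smul_eq_mul, Ideal.mul_top]
  have h := Submodule.index_smul (r := a) (mul_right_injective₀ ha) (Ideal.span {b})
  rwa [htop, ← hspan] at h

theorem Ideal.card_quot_span_prod {ι : Type*} (s : Finset ι) {a : ι → R}
    (ha : ∀ i ∈ s, a i ≠ 0) :
    Nat.card (R ⧸ Ideal.span {∏ i ∈ s, a i}) =
      ∏ i ∈ s, Nat.card (R ⧸ Ideal.span {a i}) := by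
  classical
  induction s using Finset.induction_on with
  | empty => simp [Ideal.span_singleton_one]
  | insert i s hi ih =>
    rw [Finset.prod_insert hi, Finset.prod_insert hi,
      Ideal.card_quot_span_mul (ha i (Finset.mem_insert_self i s)),
      ih (fun j hj => ha j (Finset.mem_insert_of_mem hj)), mul_comm]

theorem ne_zero_of_isTorsion_of_finite_quot_range [Infinite R] {M ι : Type*}
    [AddCommGroup M] [Module R M] (hM : Module.IsTorsion R M) {f : ι → R}
    (φ : M →ₗ[R] ∀ i, R ⧸ Ideal.span {f i})
    [Finite ((∀ i, R ⧸ Ideal.span {f i}) ⧸ LinearMap.range φ)] (i : ι) : f i ≠ 0 := by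
  classical
  intro hfi
  -- the `i`-th coordinate of `φ` kills the torsion module `M`, so `R ⧸ (0)` embeds in the cokernel
  refine Infinite.not_finite (Finite.of_injective ((LinearMap.range φ).mkQ ∘ₗ
    LinearMap.single R (fun i => R ⧸ Ideal.span {f i}) i ∘ₗ (Ideal.span {f i}).mkQ) ?_)
  refine (injective_iff_map_eq_zero _).mpr fun c h => ?_
  obtain ⟨x, hx⟩ : _ ∈ LinearMap.range φ := (Submodule.Quotient.mk_eq_zero _).mp h
  obtain ⟨s, hs⟩ := @hM x
  have h0 : ((s : R) • φ x) i = 0 := by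
    rw [← map_smul, show (s : R) • x = 0 from hs, map_zero, Pi.zero_apply]
  rw [hx] at h0
  simp only [LinearMap.coe_comp, Function.comp_apply, Pi.smul_apply] at h0
  rw [LinearMap.single_apply, Pi.single_eq_same, Submodule.mkQ_apply,
    ← Submodule.Quotient.mk_smul, Submodule.Quotient.mk_eq_zero, Ideal.mem_span_singleton, hfi,
    zero_dvd_iff, smul_eq_mul] at h0
  exact (mul_eq_zero.mp h0).resolve_left (nonZeroDivisors.coe_ne_zero s)

end Domain

namespace IsDiscreteValuationRing

variable {O : Type*} [CommRing O] [IsDomain O] [IsDiscreteValuationRing O]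

theorem infinite : Infinite O :=
  not_finite_iff_infinite.mp fun _ => not_isField O (Finite.isField_of_domain O)

theorem card_quot_span_ne_zero [Finite (IsLocalRing.ResidueField O)] {a : O} (ha : a ≠ 0) :
    Nat.card (O ⧸ Ideal.span {a}) ≠ 0 := by
  obtain ⟨π, hπ⟩ := exists_irreducible O
  obtain ⟨n, hn⟩ := associated_pow_irreducible ha hπ
  have hres : Nat.card (O ⧸ Ideal.span {π}) ≠ 0 := by
    rw [← hπ.maximalIdeal_eq]
    exact Nat.card_ne_zero.mpr ⟨inferInstance, ‹_›⟩
  rw [Ideal.span_singleton_eq_span_singleton.mpr hn, ← Finset.card_range n, ← Finset.prod_const,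
    Ideal.card_quot_span_prod _ (fun _ _ => hπ.ne_zero)]
  exact Finset.prod_ne_zero_iff.mpr fun _ _ => hres

end IsDiscreteValuationRing

namespace PowerSeries

variable {O : Type*} [CommRing O]

theorem ker_constantCoeff : RingHom.ker (constantCoeff (R := O)) = Ideal.span {X} := by
  ext φ
  rw [RingHom.mem_ker, Ideal.mem_span_singleton, X_dvd_iff]

theorem index_X_smul_top_quot (f : O⟦X⟧) :
    ((X : O⟦X⟧) • ⊤ : Submodule O⟦X⟧ (O⟦X⟧ ⧸ Ideal.span {f})).toAddSubgroup.index =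
      Nat.card (O ⧸ Ideal.span {constantCoeff f}) := by
  have hcc : Function.Surjective (constantCoeff (R := O)) := fun c => ⟨C c, constantCoeff_C c⟩
  set ψ : O⟦X⟧ →+* O ⧸ Ideal.span {constantCoeff f} :=
    (Ideal.Quotient.mk _).comp constantCoeff
  have hψ : Function.Surjective ψ := Ideal.Quotient.mk_surjective.comp hcc
  have hker : RingHom.ker ψ = Ideal.span {f} ⊔ Ideal.span {X} := by
    rw [← RingHom.comap_ker, Ideal.mk_ker, ← Set.image_singleton, ← Ideal.map_span,
      Ideal.comap_map_of_surjective _ hcc, ← RingHom.ker_eq_comap_bot, ker_constantCoeff]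
  have hsmul : ((X : O⟦X⟧) • ⊤ : Submodule O⟦X⟧ (O⟦X⟧ ⧸ Ideal.span {f})) =
      Submodule.map (Ideal.span {f}).mkQ (Ideal.span {X}) := by
    rw [← Submodule.range_mkQ, ← Submodule.map_top, ← Submodule.map_pointwise_smul,
      ← Submodule.ideal_span_singleton_smul, smul_eq_mul, Ideal.mul_top]
  rw [← AddSubgroup.index_comap_of_surjective _
    (f := ((Ideal.span {f}).mkQ : O⟦X⟧ →+ O⟦X⟧ ⧸ Ideal.span {f}))
    (Submodule.mkQ_surjective _), hsmul]
  change (Submodule.comap _ (Submodule.map _ _)).toAddSubgroup.index = _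
  rw [Submodule.comap_map_mkQ, ← hker]
  exact Nat.card_congr (RingHom.quotientKerEquivOfSurjective hψ).toEquiv

variable [IsDomain O]

theorem isSMulRegular_X_quot {f : O⟦X⟧} (hf : constantCoeff f ≠ 0) :
    IsSMulRegular (O⟦X⟧ ⧸ Ideal.span {f}) (X : O⟦X⟧) := by
  rw [isSMulRegular_iff_right_eq_zero_of_smul]
  intro z hz
  obtain ⟨w, rfl⟩ := Ideal.Quotient.mk_surjective z
  change Ideal.Quotient.mk _ (X * w) = 0 at hz
  rw [Ideal.Quotient.eq_zero_iff_mem, Ideal.mem_span_singleton] at hz ⊢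
  obtain ⟨h, hh⟩ := hz
  have hXf : ¬ X ∣ f := by rwa [X_dvd_iff]
  obtain ⟨g, rfl⟩ := (X_prime.dvd_or_dvd ⟨w, hh.symm⟩).resolve_left hXf
  exact ⟨g, mul_left_cancel₀ X_ne_zero (by rw [hh]; ring)⟩

theorem constantCoeff_ne_zero_of_finite_torsionBy [Infinite O] {f : O⟦X⟧} (hf : f ≠ 0)
    [Finite (Submodule.torsionBy O⟦X⟧ (O⟦X⟧ ⧸ Ideal.span {f}) X)] :
    constantCoeff f ≠ 0 := by
  intro h0
  obtain ⟨g, rfl⟩ := X_dvd_iff.mpr h0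
  have hg : g ≠ 0 := by rintro rfl; exact hf (mul_zero X)
  refine Infinite.not_finite (Finite.of_injective
    (fun c => (⟨Ideal.Quotient.mk _ (C c * g), ?_⟩ :
      Submodule.torsionBy O⟦X⟧ (O⟦X⟧ ⧸ Ideal.span {X * g}) X)) fun c₁ c₂ h => ?_)
  · rw [Submodule.mem_torsionBy_iff]
    change Ideal.Quotient.mk _ (X * (C c * g)) = 0
    rw [Ideal.Quotient.eq_zero_iff_mem, Ideal.mem_span_singleton]
    exact ⟨C c, by ring⟩
  · rw [Subtype.mk.injEq, Ideal.Quotient.eq, Ideal.mem_span_singleton, ← sub_mul,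
      ← map_sub] at h
    obtain ⟨k, hk⟩ := h
    have hXk : C (c₁ - c₂) = X * k := mul_right_cancel₀ hg (by rw [hk]; ring)
    have := congrArg constantCoeff hXk
    rwa [constantCoeff_C, map_mul, constantCoeff_X, zero_mul, sub_eq_zero] at this

theorem index_X_smul_top_pi_quot {ι : Type*} [Fintype ι] {f : ι → O⟦X⟧}
    (hf : ∀ i, constantCoeff (f i) ≠ 0) :
    ((X : O⟦X⟧) • ⊤ : Submodule O⟦X⟧ (∀ i, O⟦X⟧ ⧸ Ideal.span {f i})).toAddSubgroup.index =
      Nat.card (O ⧸ Ideal.span {constantCoeff (∏ i, f i)}) := by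
  simp only [Submodule.index_smul_top_pi, index_X_smul_top_quot]
  rw [map_prod, Ideal.card_quot_span_prod _ fun i _ => hf i]

end PowerSeries

theorem statement13_general {O : Type*} [CommRing O] [IsDomain O] [IsDiscreteValuationRing O]
    [Finite (IsLocalRing.ResidueField O)]
    {X : Type*} [AddCommGroup X] [Module (PowerSeries O) X]
    (hXtors : Module.IsTorsion (PowerSeries O) X)
    (hnofin : ∀ N : Submodule (PowerSeries O) X, Finite N → N = ⊥)
    (F : PowerSeries O) (hF : IsCharIdeal O X (Ideal.span {F}))
    (hfin : Finite (LinearMap.ker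
      (LinearMap.lsmul (PowerSeries O) X (PowerSeries.X : PowerSeries O)))) :
    Finite (X ⧸ ((Ideal.span {(PowerSeries.X : PowerSeries O)}) •
        (⊤ : Submodule (PowerSeries O) X))) ∧
      Nat.card (X ⧸ ((Ideal.span {(PowerSeries.X : PowerSeries O)}) •
          (⊤ : Submodule (PowerSeries O) X))) =
        Nat.card (O ⧸ Ideal.span {PowerSeries.constantCoeff (R := O) F}) *
          Nat.card (LinearMap.ker
            (LinearMap.lsmul (PowerSeries O) X (PowerSeries.X : PowerSeries O))) := by
  obtain ⟨n, f, φ, hker, hcoker, hFf⟩ := hF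
  have hφ : Function.Injective φ := LinearMap.ker_eq_bot.mp (hnofin _ hker)
  have hXT := hnofin _ hfin
  have hX : IsSMulRegular X (PowerSeries.X : PowerSeries O) :=
    (isSMulRegular_iff_ker_lsmul_eq_bot _ _).mpr hXT
  have : Infinite O := IsDiscreteValuationRing.infinite
  have : Infinite (PowerSeries O) := Infinite.of_injective C C_injective
  have hf (i) : f i ≠ 0 := ne_zero_of_isTorsion_of_finite_quot_range hXtors φ i
  have hf0 (i) : constantCoeff (f i) ≠ 0 :=
    have := finite_torsionBy_of_pi (finite_torsionBy_of_injective hφ hX) i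
    constantCoeff_ne_zero_of_finite_torsionBy (hf i)
  have hF0 : Ideal.span {constantCoeff F} = Ideal.span {constantCoeff (∏ i, f i)} :=
    Ideal.span_singleton_eq_span_singleton.mpr
      ((Ideal.span_singleton_eq_span_singleton.mp hFf).map constantCoeff)
  have hF0ne : constantCoeff F ≠ 0 := by
    rw [Ne, ← Ideal.span_singleton_eq_bot, hF0, Ideal.span_singleton_eq_bot, map_prod]
    exact Finset.prod_ne_zero_iff.mpr fun i _ => hf0 i
  have hcard : Nat.card (X ⧸ Ideal.span {(PowerSeries.X : PowerSeries O)} •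
      (⊤ : Submodule (PowerSeries O) X)) = Nat.card (O ⧸ Ideal.span {constantCoeff F}) := by
    rw [Submodule.ideal_span_singleton_smul, hF0, ← index_X_smul_top_pi_quot hf0]
    exact index_smul_top_eq_of_injective hφ (AddSubgroup.index_ne_zero_iff_finite.mpr hcoker)
      (IsSMulRegular.pi fun i => isSMulRegular_X_quot (hf0 i))
  refine ⟨Nat.finite_of_card_ne_zero
    (hcard ▸ IsDiscreteValuationRing.card_quot_span_ne_zero hF0ne), ?_⟩
  rw [hcard, hXT, Nat.card_unique (α := (⊥ : Submodule (PowerSeries O) X)), mul_one]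

/-- Let `X` be a finitely generated torsion module over `Λ = O⟦T⟧` with
characteristic power series `F ∈ Λ`, having no nonzero finite `Λ`-submodule.  If
`X^Γ = X[T]` is finite, then `X_Γ = X/TX` is finite and
`#(X/TX) = #(O/F(0)) · #(X[T])`. -/
theorem statement13 {O : Type*} [CommRing O] [IsDomain O] [IsDiscreteValuationRing O]
    [Finite (IsLocalRing.ResidueField O)]
    {X : Type*} [AddCommGroup X] [Module (PowerSeries O) X]
    [Module.Finite (PowerSeries O) X]
    (hXtors : Module.IsTorsion (PowerSeries O) X)
    (hnofin : ∀ N : Submodule (PowerSeries O) X, Finite N → N = ⊥)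
    (F : PowerSeries O) (hF : IsCharIdeal O X (Ideal.span {F}))
    (hfin : Finite (LinearMap.ker
      (LinearMap.lsmul (PowerSeries O) X (PowerSeries.X : PowerSeries O)))) :
    Finite (X ⧸ ((Ideal.span {(PowerSeries.X : PowerSeries O)}) •
        (⊤ : Submodule (PowerSeries O) X))) ∧
      Nat.card (X ⧸ ((Ideal.span {(PowerSeries.X : PowerSeries O)}) •
          (⊤ : Submodule (PowerSeries O) X))) =
        Nat.card (O ⧸ Ideal.span {PowerSeries.constantCoeff (R := O) F}) *
          Nat.card (LinearMap.ker
            (LinearMap.lsmul (PowerSeries O) X (PowerSeries.X : PowerSeries O))) :=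
  statement13_general hXtors hnofin F hF hfin
end

section
/- Let O be a complete DVR with uniformizer π and let T be a free O-module of rank 2 with continuous action of a profinite group G such that the semisimplification of T/πT is a direct sum of two characters φ ⊕ ψ over the residue field. Then there exists a G-stable O-lattice T' in V = T ⊗ Frac(O) such that T'/πT' is an extension 0 → F(φ) → T'/πT' → F(ψ) → 0 (i.e., with φ as the sub-representation). -/
/-! If `T = ⟨e₁, e₂⟩` has `χ₁` on the line of `e₁` and `χ₂` on the quotient modulo `πT`, pass to
the sublattice `T' = ⟨π • e₂, e₁⟩`, which lies between `πT` and `T`. Since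
`ρ g e₂ ≡ c • e₂` modulo `⟨e₁⟩ + πT ⊆ T'`, multiplying by `π` shows that `π • e₂` spans a
`G`-stable line of `T'/πT'` with character `χ₂`; the quotient by it is spanned by `e₁`, with
character `χ₁`. Both lattices span the same `K`-space because `π` is invertible in `K`. -/

variable {O : Type*} [CommRing O] [IsDomain O] [IsDiscreteValuationRing O]
variable {V : Type*} [AddCommGroup V] [Module (FractionRing O) V]
  [Module O V] [IsScalarTower O (FractionRing O) V]
variable {G : Type*} [Group G]

/-- `T/πT` is an extension `0 → F(χ₁) → T/πT → F(χ₂) → 0` of residual representations: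
there are generators `e₁, e₂` of the lattice `T` such that, modulo `πT`,
`g` acts on `e₁` by `χ₁(g)` and on `e₂` by `χ₂(g)` modulo the line spanned by `e₁`. -/
def ResidualExtension (π : O) (ρ : Representation (FractionRing O) G V)
    (T : Submodule O V) (χ₁ χ₂ : G →* (IsLocalRing.ResidueField O)ˣ) : Prop :=
  ∃ e₁ e₂ : V, e₁ ∈ T ∧ e₂ ∈ T ∧ T = Submodule.span O {e₁, e₂} ∧
    (∀ g : G, ∃ c : O, IsLocalRing.residue O c = (χ₁ g : IsLocalRing.ResidueField O) ∧
      ρ g e₁ - c • e₁ ∈ (Ideal.span {π} : Ideal O) • T) ∧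
    (∀ g : G, ∃ c : O, IsLocalRing.residue O c = (χ₂ g : IsLocalRing.ResidueField O) ∧
      ρ g e₂ - c • e₂ ∈ ((Ideal.span {π} : Ideal O) • T ⊔ Submodule.span O {e₁}))

namespace Submodule

section Swap

variable {R M : Type*} [CommRing R] [AddCommGroup M] [Module R M] (π : R) (e₁ e₂ : M)

theorem ideal_span_singleton_smul_span_pair :
    (Ideal.span {π} : Ideal R) • span R {e₁, e₂} = span R {π • e₁, π • e₂} := by
  rw [ideal_span_singleton_smul, ← span_smul, Set.smul_set_insert, Set.smul_set_singleton]

theorem ideal_span_singleton_smul_span_pair_le_span_swap :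
    (Ideal.span {π} : Ideal R) • span R {e₁, e₂} ≤ span R {π • e₂, e₁} := by
  rw [ideal_span_singleton_smul_span_pair, span_le, Set.insert_subset_iff,
    Set.singleton_subset_iff]
  exact ⟨smul_mem _ π (subset_span (by simp)), subset_span (by simp)⟩

theorem ideal_span_singleton_smul_span_pair_le_sup_swap :
    (Ideal.span {π} : Ideal R) • span R {e₁, e₂} ≤
      (Ideal.span {π} : Ideal R) • span R {π • e₂, e₁} ⊔ span R {π • e₂} := by
  rw [ideal_span_singleton_smul_span_pair, span_le, Set.insert_subset_iff,
    Set.singleton_subset_iff]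
  exact ⟨mem_sup_left (smul_mem_smul (Ideal.mem_span_singleton_self π) (subset_span (by simp))),
    mem_sup_right (mem_span_singleton_self _)⟩

theorem span_swap_le_comap {f : M →ₗ[R] M} (c : R)
    (hf : span R {e₁, e₂} ≤ (span R {e₁, e₂}).comap f)
    (he₁ : f e₁ - c • e₁ ∈ (Ideal.span {π} : Ideal R) • span R {e₁, e₂}) :
    span R {π • e₂, e₁} ≤ (span R {π • e₂, e₁}).comap f := by
  have hle := ideal_span_singleton_smul_span_pair_le_span_swap π e₁ e₂
  have he₁' : e₁ ∈ span R {π • e₂, e₁} := subset_span (by simp)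
  rw [span_le, Set.insert_subset_iff, Set.singleton_subset_iff, SetLike.mem_coe, SetLike.mem_coe,
    mem_comap, mem_comap, map_smul]
  refine ⟨hle (smul_mem_smul (Ideal.mem_span_singleton_self π) (hf (subset_span (by simp)))), ?_⟩
  rw [← sub_add_cancel (f e₁) (c • e₁)]
  exact add_mem (hle he₁) (smul_mem _ c he₁')

theorem smul_mem_ideal_span_singleton_smul_span_swap {x : M}
    (hx : x ∈ (Ideal.span {π} : Ideal R) • span R {e₁, e₂} ⊔ span R {e₁}) :
    π • x ∈ (Ideal.span {π} : Ideal R) • span R {π • e₂, e₁} :=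
  smul_mem_smul (Ideal.mem_span_singleton_self π) <|
    sup_le (ideal_span_singleton_smul_span_pair_le_span_swap π e₁ e₂)
      (span_le.2 (Set.singleton_subset_iff.2 (subset_span (by simp)))) hx

end Swap

section FractionSpan

variable {R K M : Type*} [CommRing R] [Field K] [Algebra R K] [AddCommGroup M] [Module R M]
  [Module K M] [IsScalarTower R K M]

theorem span_span_swap_eq {π : R} (hπ : algebraMap R K π ≠ 0) (e₁ e₂ : M) :
    span K (span R {π • e₂, e₁} : Set M) = span K (span R {e₁, e₂} : Set M) := by
  rw [span_span_of_tower, span_span_of_tower, Set.pair_comm, span_insert, span_insert,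
    ← algebraMap_smul K π e₂, span_singleton_smul_eq (Ne.isUnit hπ)]

end FractionSpan

end Submodule

omit [IsScalarTower O (FractionRing O) V] in
theorem ResidualExtension.fg {π : O} {ρ : Representation (FractionRing O) G V}
    {T : Submodule O V} {χ₁ χ₂ : G →* (IsLocalRing.ResidueField O)ˣ}
    (h : ResidualExtension π ρ T χ₁ χ₂) : T.FG := by
  obtain ⟨e₁, e₂, -, -, rfl, -⟩ := h
  exact Submodule.fg_span (Set.toFinite _)

open Submodule in
theorem ResidualExtension.swap {π : O} (hπ : π ≠ 0) {ρ : Representation (FractionRing O) G V}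
    {T : Submodule O V} {χ₁ χ₂ : G →* (IsLocalRing.ResidueField O)ˣ}
    (hstable : ∀ g : G, ∀ x ∈ T, ρ g x ∈ T) (h : ResidualExtension π ρ T χ₁ χ₂) :
    ∃ T' : Submodule O V,
      span (FractionRing O) (T' : Set V) = span (FractionRing O) (T : Set V) ∧
      (∀ g : G, ∀ x ∈ T', ρ g x ∈ T') ∧ ResidualExtension π ρ T' χ₂ χ₁ := by
  obtain ⟨e₁, e₂, -, -, rfl, h₁, h₂⟩ := h
  have hπK : algebraMap O (FractionRing O) π ≠ 0 :=
    (map_ne_zero_iff _ (IsFractionRing.injective O _)).2 hπ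
  refine ⟨span O {π • e₂, e₁}, span_span_swap_eq hπK e₁ e₂,
    fun g => ?_, π • e₂, e₁, subset_span (by simp), subset_span (by simp), rfl, fun g => ?_,
    fun g => ?_⟩
  · obtain ⟨c, -, hc⟩ := h₁ g
    exact span_swap_le_comap (f := (ρ g).restrictScalars O) π e₁ e₂ c (hstable g) hc
  · obtain ⟨c, hc, hm⟩ := h₂ g
    refine ⟨c, hc, ?_⟩
    rw [LinearMap.map_smul_of_tower, smul_comm c π, ← smul_sub]
    exact smul_mem_ideal_span_singleton_smul_span_swap π e₁ e₂ hm
  · obtain ⟨c, hc, hm⟩ := h₁ g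
    exact ⟨c, hc, ideal_span_singleton_smul_span_pair_le_sup_swap π e₁ e₂ hm⟩

theorem statement16_general
    (π : O) (hπ : Irreducible π)
    (ρ : Representation (FractionRing O) G V)
    (φ ψ : G →* (IsLocalRing.ResidueField O)ˣ)
    (T : Submodule O V)
    (hfull : Submodule.span (FractionRing O) (T : Set V) = ⊤)
    (hstable : ∀ g : G, ∀ x ∈ T, ρ g x ∈ T)
    (hss : ResidualExtension π ρ T φ ψ ∨ ResidualExtension π ρ T ψ φ) :
    ∃ T' : Submodule O V, T'.FG ∧
      Submodule.span (FractionRing O) (T' : Set V) = ⊤ ∧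
      (∀ g : G, ∀ x ∈ T', ρ g x ∈ T') ∧
      ResidualExtension π ρ T' φ ψ := by
  rcases hss with h | h
  · exact ⟨T, h.fg, hfull, hstable, h⟩
  · obtain ⟨T', hspan, hT'stable, hT'⟩ := h.swap hπ.ne_zero hstable
    exact ⟨T', hT'.fg, hspan.trans hfull, hT'stable, hT'⟩

/-- Ribet's lemma, choice of lattice: Let `O` be a complete DVR with
uniformizer `π` and residue field `F`, let `V` be a 2-dimensional representation of a
group `G` over `K = Frac(O)`, and let `T ⊆ V` be a `G`-stable `O`-lattice whose residual
representation `T/πT` has semisimplification `φ ⊕ ψ` (i.e. it is an extension of one of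
the two characters by the other), with `φ ≠ ψ`.  Then there exists a `G`-stable `O`-lattice
`T' ⊆ V` such that `T'/πT'` is an extension `0 → F(φ) → T'/πT' → F(ψ) → 0`, i.e. with `φ`
as the sub-representation. -/
theorem statement16 [IsAdicComplete (IsLocalRing.maximalIdeal O) O]
    (π : O) (hπ : Irreducible π)
    (ρ : Representation (FractionRing O) G V)
    (hdim : Module.finrank (FractionRing O) V = 2)
    (φ ψ : G →* (IsLocalRing.ResidueField O)ˣ) (hne : φ ≠ ψ)
    (T : Submodule O V) (hfg : T.FG)
    (hfull : Submodule.span (FractionRing O) (T : Set V) = ⊤)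
    (hstable : ∀ g : G, ∀ x ∈ T, ρ g x ∈ T)
    (hss : ResidualExtension π ρ T φ ψ ∨ ResidualExtension π ρ T ψ φ) :
    ∃ T' : Submodule O V, T'.FG ∧
      Submodule.span (FractionRing O) (T' : Set V) = ⊤ ∧
      (∀ g : G, ∀ x ∈ T', ρ g x ∈ T') ∧
      ResidualExtension π ρ T' φ ψ :=
  statement16_general π hπ ρ φ ψ T hfull hstable hss
end
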